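/- arXiv:2505.11028 — 2 statements merged into one kernel-verified Lean document; each statement's English description precedes it below -/
import Mathlib

section
/- Let A be a nonnegative selfadjoint operator on a complex Hilbert space X with trivial kernel. For α > 0, define A_α on the Hilbert space R(A^α) (with the norm of Lemma on the range) by D(A_α) = D(A) ∩ R(A^α) and A_α u = A u. Then A_α is a densely defined, nonnegative, selfadjoint operator in R(A^α); in particular the range condition R(I + A_α) = R(A^α) holds. -/
/-!
By the spectral theorem, every nonnegative selfadjoint operator `A` on a complex
Hilbert space `X` (with trivial kernel) is unitarily equivalent to multiplication by a
measurable function `a ≥ 0` (with `a > 0` a.e.) on some `L²(μ)`.  We formalize the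
statement in this spectral model: `X = L²(μ)`, `(e^{-tA}x)(i) = exp(-t·a i)·x i`,
`(A^α y)(i) = (a i)^α·y i`, and `x ∈ R(A^α)` iff `x = A^α y` for some `y ∈ L²(μ)`.
-/

open MeasureTheory Filter
open scoped ENNReal NNReal Topology

/-- `‖e^{-tA} x‖²` in the spectral model. -/
noncomputable def heatNormSq {ι : Type*} [MeasurableSpace ι] (μ : Measure ι)
    (a : ι → ℝ) (x : ι → ℂ) (t : ℝ) : ℝ≥0∞ :=
  ∫⁻ i, (‖x i‖₊ : ℝ≥0∞) ^ 2 * ENNReal.ofReal (Real.exp (-(2 * t * a i))) ∂μ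

/-- `∫₀^∞ t^{2α-1} ‖e^{-tA} x‖² dt` in the spectral model; this is the square of the
norm `|||x|||_{R(A^α)}`. -/
noncomputable def rangeIntegral {ι : Type*} [MeasurableSpace ι] (μ : Measure ι)
    (a : ι → ℝ) (α : ℝ) (x : ι → ℂ) : ℝ≥0∞ :=
  ∫⁻ t in Set.Ioi (0 : ℝ), ENNReal.ofReal (t ^ (2 * α - 1)) * heatNormSq μ a x t

/-- Membership of `x` in `R(A^α)` in the spectral model. -/
def memRange {ι : Type*} [MeasurableSpace ι] (μ : Measure ι)
    (a : ι → ℝ) (α : ℝ) (x : ι → ℂ) : Prop :=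
  MemLp x 2 μ ∧ ∃ y : ι → ℂ, MemLp y 2 μ ∧ x =ᵐ[μ] fun i => ((a i ^ α : ℝ) : ℂ) * y i

/-- Membership of `u` in `D(A_α) = D(A) ∩ R(A^α)` in the spectral model. -/
def memDomAalpha {ι : Type*} [MeasurableSpace ι] (μ : Measure ι)
    (a : ι → ℝ) (α : ℝ) (u : ι → ℂ) : Prop :=
  memRange μ a α u ∧ MemLp (fun i => (a i : ℂ) * u i) 2 μ

/-- The inner product of `R(A^α)`:
`⟨x,y⟩_{R(A^α)} = ⟨x,y⟩_X + ∫₀^∞ t^{2α-1} ⟨e^{-tA}x, e^{-tA}y⟩_X dt`. -/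
noncomputable def innerRange {ι : Type*} [MeasurableSpace ι] (μ : Measure ι)
    (a : ι → ℝ) (α : ℝ) (x y : ι → ℂ) : ℂ :=
  (∫ i, (starRingEnd ℂ) (x i) * y i ∂μ) +
    ∫ t in Set.Ioi (0 : ℝ), ((t ^ (2 * α - 1) : ℝ) : ℂ) *
      ∫ i, ((Real.exp (-(2 * t * a i)) : ℝ) : ℂ) * ((starRingEnd ℂ) (x i) * y i) ∂μ

/-! In the spectral model `A_α` is multiplication by `a`, so symmetry and nonnegativity are
pointwise identities for the integrands of `innerRange`. The range condition is solved by
`u = (1 + a)⁻¹ x`, which stays in `R(A^α)` with preimage `(1 + a)⁻¹ y`. For density, truncate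
`x` to `{a ≤ n}`: the remainder lives where `a > n ≥ 1`, where `‖e^{-tA} w‖ ≤ e^{-t} ‖w‖`, so
its squared `R(A^α)`-norm is at most `1 + Γ(2α)/4^α` times its squared `L²`-norm, which tends
to `0` by dominated convergence. -/

open Set

lemma lintegral_rpow_mul_exp_neg_mul_Ioi {p b : ℝ} (hp : 0 < p) (hb : 0 < b) :
    ∫⁻ t in Ioi (0 : ℝ), ENNReal.ofReal (t ^ (p - 1) * Real.exp (-(b * t)))
      = ENNReal.ofReal ((1 / b) ^ p * Real.Gamma p) := by
  have hint := Real.integral_rpow_mul_exp_neg_mul_Ioi hp hb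
  rw [← hint, ofReal_integral_eq_lintegral_ofReal]
  · exact Integrable.of_integral_ne_zero (by rw [hint]; positivity)
  · filter_upwards [ae_restrict_mem measurableSet_Ioi] with t ht
    exact mul_nonneg (Real.rpow_nonneg (le_of_lt ht) _) (Real.exp_nonneg _)

section

variable {ι : Type*} [MeasurableSpace ι] {μ : Measure ι}

lemma eLpNorm_two_sq {E : Type*} [NormedAddCommGroup E] (f : ι → E) :
    eLpNorm f 2 μ ^ 2 = ∫⁻ i, (‖f i‖₊ : ℝ≥0∞) ^ 2 ∂μ := by
  have h := eLpNorm_nnreal_pow_eq_lintegral (μ := μ) (f := f) (p := 2) two_ne_zero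
  simp only [ENNReal.coe_ofNat, NNReal.coe_ofNat, ENNReal.rpow_ofNat] at h
  simpa only [enorm_eq_nnnorm] using h

lemma memLp_mul_of_norm_le {R : Type*} [NormedRing R] {p : ℝ≥0∞} {f g : ι → R} {C : ℝ}
    (hf : MemLp f p μ) (hg : AEStronglyMeasurable g μ) (hgC : ∀ i, ‖g i‖ ≤ C) :
    MemLp (fun i => g i * f i) p μ :=
  hf.of_le_mul (hg.mul hf.1) <| ae_of_all _ fun i =>
    (norm_mul_le _ _).trans (mul_le_mul_of_nonneg_right (hgC i) (norm_nonneg _))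

lemma tendsto_eLpNorm_indicator_lt_atTop {E : Type*} [NormedAddCommGroup E] {a : ι → ℝ}
    {f : ι → E} (hf : MemLp f 2 μ) (ha : Measurable a) :
    Tendsto (fun n : ℕ => eLpNorm ({i | (n : ℝ) < a i}.indicator f) 2 μ ^ 2) atTop (𝓝 0) := by
  simp only [eLpNorm_two_sq]
  rw [← lintegral_zero]
  refine tendsto_lintegral_of_dominated_convergence' (fun i => (‖f i‖₊ : ℝ≥0∞) ^ 2)
    (fun n => ?_) (fun n => ae_of_all _ fun i => ?_) ?_ (ae_of_all _ fun i => ?_)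
  · exact ((hf.1.indicator (measurableSet_lt measurable_const ha)).enorm.pow_const 2)
  · exact pow_le_pow_left' (enorm_indicator_le_enorm_self f i) 2
  · rw [← eLpNorm_two_sq]
    exact ENNReal.pow_ne_top hf.eLpNorm_ne_top
  · refine tendsto_atTop_of_eventually_const (i₀ := ⌈a i⌉₊) fun n hn => ?_
    have hn : a i ≤ n := (Nat.le_ceil (a i)).trans (Nat.cast_le.mpr hn)
    rw [indicator_of_notMem (show i ∉ {i | (n : ℝ) < a i} from not_lt.mpr hn)]
    simp

variable {a : ι → ℝ} {α : ℝ}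

lemma memRange.indicator {x : ι → ℂ} (hx : memRange μ a α x) {s : Set ι}
    (hs : MeasurableSet s) : memRange μ a α (s.indicator x) := by
  obtain ⟨hx2, y, hy2, hxy⟩ := hx
  refine ⟨hx2.indicator hs, s.indicator y, hy2.indicator hs, hxy.mono fun i hi => ?_⟩
  by_cases hi' : i ∈ s <;> simp [hi, hi']

lemma memRange.mul_of_norm_le {x g : ι → ℂ} (hx : memRange μ a α x)
    (hg : AEStronglyMeasurable g μ) {C : ℝ} (hgC : ∀ i, ‖g i‖ ≤ C) :
    memRange μ a α (fun i => g i * x i) := by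
  obtain ⟨hx2, y, hy2, hxy⟩ := hx
  refine ⟨memLp_mul_of_norm_le hx2 hg hgC, fun i => g i * y i,
    memLp_mul_of_norm_le hy2 hg hgC, hxy.mono fun i hi => ?_⟩
  simp only [hi]
  ring

lemma memDomAalpha_indicator_le (ha : Measurable a) (ha0 : ∀ i, 0 ≤ a i) {x : ι → ℂ}
    (hx : memRange μ a α x) (n : ℝ) : memDomAalpha μ a α ({i | a i ≤ n}.indicator x) := by
  have hs : MeasurableSet {i | a i ≤ n} := measurableSet_le ha measurable_const
  refine ⟨hx.indicator hs, hx.1.of_le_mul (c := |n|) ?_ (ae_of_all _ fun i => ?_)⟩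
  · exact (Complex.measurable_ofReal.comp ha).aestronglyMeasurable.mul
      (hx.1.1.indicator hs)
  · by_cases hi : a i ≤ n
    · simp only [indicator_of_mem (show i ∈ {i | a i ≤ n} from hi), norm_mul,
        Complex.norm_real, Real.norm_eq_abs, abs_of_nonneg (ha0 i)]
      exact mul_le_mul_of_nonneg_right (hi.trans (le_abs_self n)) (norm_nonneg _)
    · simp only [indicator_of_notMem (show i ∉ {i | a i ≤ n} from hi), mul_zero, norm_zero]
      positivity

lemma heatNormSq_le_exp_mul_eLpNorm_sq {w : ι → ℂ} {s t : ℝ} (ht : 0 ≤ t)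
    (hw : ∀ i, a i < s → w i = 0) :
    heatNormSq μ a w t ≤ ENNReal.ofReal (Real.exp (-(2 * t * s))) * eLpNorm w 2 μ ^ 2 := by
  rw [eLpNorm_two_sq, ← lintegral_const_mul' _ _ ENNReal.ofReal_ne_top]
  refine lintegral_mono fun i => ?_
  rw [mul_comm]
  by_cases hi : a i < s
  · simp [hw i hi]
  · gcongr
    nlinarith [not_lt.mp hi]

lemma rangeIntegral_le_mul_eLpNorm_sq (hα : 0 < α) {w : ι → ℂ} {s : ℝ} (hs : 0 < s)
    (hw : ∀ i, a i < s → w i = 0) :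
    rangeIntegral μ a α w
      ≤ ENNReal.ofReal ((1 / (2 * s)) ^ (2 * α) * Real.Gamma (2 * α)) * eLpNorm w 2 μ ^ 2 := by
  calc rangeIntegral μ a α w
      ≤ ∫⁻ t in Ioi (0 : ℝ), ENNReal.ofReal (t ^ (2 * α - 1)) *
          (ENNReal.ofReal (Real.exp (-(2 * t * s))) * eLpNorm w 2 μ ^ 2) :=
        setLIntegral_mono' measurableSet_Ioi fun t ht => by
          gcongr
          exact heatNormSq_le_exp_mul_eLpNorm_sq (le_of_lt ht) hw
    _ = (∫⁻ t in Ioi (0 : ℝ), ENNReal.ofReal (t ^ (2 * α - 1) * Real.exp (-(2 * s * t))))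
          * eLpNorm w 2 μ ^ 2 := by
        rw [← lintegral_mul_const _ (by fun_prop)]
        refine setLIntegral_congr_fun measurableSet_Ioi fun t ht => ?_
        rw [ENNReal.ofReal_mul (Real.rpow_nonneg (le_of_lt ht) _), ← mul_assoc,
          show 2 * s * t = 2 * t * s by ring]
    _ = _ := by rw [lintegral_rpow_mul_exp_neg_mul_Ioi (by positivity) (by positivity)]

theorem exists_memDomAalpha_eLpNorm_sq_add_rangeIntegral_lt (ha : Measurable a)
    (ha0 : ∀ i, 0 ≤ a i) (hα : 0 < α) {x : ι → ℂ} (hx : memRange μ a α x) {ε : ℝ}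
    (hε : 0 < ε) :
    ∃ u : ι → ℂ, memDomAalpha μ a α u ∧
      eLpNorm (fun i => x i - u i) 2 μ ^ 2 + rangeIntegral μ a α (fun i => x i - u i)
        < ENNReal.ofReal ε := by
  set C := ENNReal.ofReal ((1 / (2 * 1)) ^ (2 * α) * Real.Gamma (2 * α))
  have htail : Tendsto (fun n : ℕ => (1 + C) * eLpNorm ({i | (n : ℝ) < a i}.indicator x) 2 μ ^ 2)
      atTop (𝓝 0) := by
    simpa using ENNReal.Tendsto.const_mul (tendsto_eLpNorm_indicator_lt_atTop hx.1 ha)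
      (Or.inr (by finiteness))
  obtain ⟨n, hn, hn1⟩ :=
    ((htail.eventually_lt_const (ENNReal.ofReal_pos.mpr hε)).and (eventually_ge_atTop 1)).exists
  refine ⟨{i | a i ≤ n}.indicator x, memDomAalpha_indicator_le ha ha0 hx n, ?_⟩
  have hrem : (fun i => x i - {i | a i ≤ n}.indicator x i) = {i | (n : ℝ) < a i}.indicator x := by
    ext i
    by_cases hi : a i ≤ n
    · simp [hi, not_lt.mpr hi]
    · simp [hi, not_le.mp hi]
  have hvanish : ∀ i, a i < 1 → {i | (n : ℝ) < a i}.indicator x i = 0 := fun i hi =>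
    indicator_of_notMem (show i ∉ {i | (n : ℝ) < a i} from
      not_lt.mpr (hi.le.trans (Nat.one_le_cast.mpr hn1))) x
  rw [hrem]
  calc _ ≤ eLpNorm ({i | (n : ℝ) < a i}.indicator x) 2 μ ^ 2
          + C * eLpNorm ({i | (n : ℝ) < a i}.indicator x) 2 μ ^ 2 :=
        by gcongr; exact rangeIntegral_le_mul_eLpNorm_sq hα one_pos hvanish
    _ = (1 + C) * eLpNorm ({i | (n : ℝ) < a i}.indicator x) 2 μ ^ 2 := by ring
    _ < _ := hn

theorem exists_memDomAalpha_eq_add_mul (ha : Measurable a) (ha0 : ∀ i, 0 ≤ a i)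
    {x : ι → ℂ} (hx : memRange μ a α x) :
    ∃ u : ι → ℂ, memDomAalpha μ a α u ∧ x =ᵐ[μ] fun i => u i + (a i : ℂ) * u i := by
  set g : ι → ℂ := fun i => ((1 + a i : ℝ) : ℂ)⁻¹
  have hg : AEStronglyMeasurable g μ :=
    (Complex.measurable_ofReal.comp (measurable_const.add ha)).inv.aestronglyMeasurable
  have hnorm_g : ∀ i, ‖g i‖ = (1 + a i)⁻¹ := fun i => by
    simp only [g, norm_inv, Complex.norm_real, Real.norm_eq_abs, abs_of_pos
      (show 0 < 1 + a i by linarith [ha0 i])]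
  refine ⟨fun i => g i * x i, ⟨hx.mul_of_norm_le hg (C := 1) fun i => ?_, ?_⟩, ?_⟩
  · rw [hnorm_g]
    exact inv_le_one_of_one_le₀ (by linarith [ha0 i])
  · refine memLp_mul_of_norm_le (g := fun i => (a i : ℂ) * g i) hx.1
      ((Complex.measurable_ofReal.comp ha).aestronglyMeasurable.mul hg) (C := 1) (fun i => ?_)
      |>.ae_eq (ae_of_all _ fun i => mul_assoc _ _ _)
    rw [norm_mul, hnorm_g, Complex.norm_real, Real.norm_eq_abs, abs_of_nonneg (ha0 i),
      ← div_eq_mul_inv, div_le_one (by linarith [ha0 i])]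
    linarith
  · refine ae_of_all _ fun i => ?_
    have h1 : ((1 + a i : ℝ) : ℂ) ≠ 0 := Complex.ofReal_ne_zero.mpr (by linarith [ha0 i])
    simp only [g]
    push_cast at h1 ⊢
    field_simp

lemma innerRange_ofReal_mul_left (b : ι → ℝ) (u v : ι → ℂ) :
    innerRange μ a α (fun i => (b i : ℂ) * u i) v
      = innerRange μ a α u (fun i => (b i : ℂ) * v i) := by
  have h : ∀ i, (starRingEnd ℂ) ((b i : ℂ) * u i) * v i
      = (starRingEnd ℂ) (u i) * ((b i : ℂ) * v i) := fun i => by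
    rw [map_mul, Complex.conj_ofReal]
    ring
  simp only [innerRange, h]

lemma innerRange_ofReal_mul_self_re_nonneg {b : ι → ℝ} (hb : ∀ i, 0 ≤ b i) (u : ι → ℂ) :
    0 ≤ (innerRange μ a α (fun i => (b i : ℂ) * u i) u).re := by
  have h : ∀ i, (starRingEnd ℂ) ((b i : ℂ) * u i) * u i = ((b i * ‖u i‖ ^ 2 : ℝ) : ℂ) :=
    fun i => by
      rw [map_mul, Complex.conj_ofReal, mul_assoc, Complex.conj_mul']
      push_cast
      ring
  simp only [innerRange, h, ← Complex.ofReal_mul, integral_complex_ofReal, ← Complex.ofReal_add,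
    Complex.ofReal_re]
  refine add_nonneg (integral_nonneg fun i => mul_nonneg (hb i) (sq_nonneg _)) ?_
  refine setIntegral_nonneg measurableSet_Ioi fun t ht => ?_
  exact mul_nonneg (Real.rpow_nonneg (le_of_lt ht) _)
    (integral_nonneg fun i => mul_nonneg (Real.exp_nonneg _) (mul_nonneg (hb i) (sq_nonneg _)))

end

theorem stmt4_general {ι : Type*} [MeasurableSpace ι] (μ : Measure ι)
    (a : ι → ℝ) (hameas : Measurable a) (ha0 : ∀ i, 0 ≤ a i)
    (α : ℝ) (hα : 0 < α) :
    -- densely defined in `R(A^α)`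
    (∀ x : ι → ℂ, memRange μ a α x → ∀ ε > (0 : ℝ), ∃ u : ι → ℂ,
        memDomAalpha μ a α u ∧
        (eLpNorm (fun i => x i - u i) 2 μ) ^ 2
          + rangeIntegral μ a α (fun i => x i - u i) < ENNReal.ofReal ε) ∧
    -- symmetric in `R(A^α)`
    (∀ u v : ι → ℂ, memDomAalpha μ a α u → memDomAalpha μ a α v →
        innerRange μ a α (fun i => (a i : ℂ) * u i) v
          = innerRange μ a α u (fun i => (a i : ℂ) * v i)) ∧
    -- nonnegative in `R(A^α)`
    (∀ u : ι → ℂ, memDomAalpha μ a α u →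
        0 ≤ (innerRange μ a α (fun i => (a i : ℂ) * u i) u).re) ∧
    -- range condition `R(I + A_α) = R(A^α)`, giving selfadjointness
    (∀ x : ι → ℂ, memRange μ a α x → ∃ u : ι → ℂ,
        memDomAalpha μ a α u ∧ x =ᵐ[μ] fun i => u i + (a i : ℂ) * u i) :=
  ⟨fun _ hx _ hε => exists_memDomAalpha_eLpNorm_sq_add_rangeIntegral_lt hameas ha0 hα hx hε,
    fun u v _ _ => innerRange_ofReal_mul_left a u v,
    fun u _ => innerRange_ofReal_mul_self_re_nonneg ha0 u,
    fun _ hx => exists_memDomAalpha_eq_add_mul hameas ha0 hx⟩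

/-- The realization `A_α` of `A` in the Hilbert space `R(A^α)`, with
domain `D(A_α) = D(A) ∩ R(A^α)` and `A_α u = Au`, is densely defined, symmetric,
nonnegative and selfadjoint in `R(A^α)`; in particular `R(I + A_α) = R(A^α)`. -/
theorem stmt4 {ι : Type*} [MeasurableSpace ι] (μ : Measure ι)
    (a : ι → ℝ) (hameas : Measurable a) (ha0 : ∀ i, 0 ≤ a i)
    (hker : ∀ᵐ i ∂μ, a i ≠ 0) (α : ℝ) (hα : 0 < α) :
    -- densely defined in `R(A^α)`
    (∀ x : ι → ℂ, memRange μ a α x → ∀ ε > (0 : ℝ), ∃ u : ι → ℂ,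
        memDomAalpha μ a α u ∧
        (eLpNorm (fun i => x i - u i) 2 μ) ^ 2
          + rangeIntegral μ a α (fun i => x i - u i) < ENNReal.ofReal ε) ∧
    -- symmetric in `R(A^α)`
    (∀ u v : ι → ℂ, memDomAalpha μ a α u → memDomAalpha μ a α v →
        innerRange μ a α (fun i => (a i : ℂ) * u i) v
          = innerRange μ a α u (fun i => (a i : ℂ) * v i)) ∧
    -- nonnegative in `R(A^α)`
    (∀ u : ι → ℂ, memDomAalpha μ a α u →
        0 ≤ (innerRange μ a α (fun i => (a i : ℂ) * u i) u).re) ∧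
    -- range condition `R(I + A_α) = R(A^α)`, giving selfadjointness
    (∀ x : ι → ℂ, memRange μ a α x → ∃ u : ι → ℂ,
        memDomAalpha μ a α u ∧ x =ᵐ[μ] fun i => u i + (a i : ℂ) * u i) :=
  stmt4_general μ a hameas ha0 α hα
end

section
/- Let A be a nonnegative selfadjoint operator on a complex Hilbert space X with trivial kernel, let α ∈ (0, 1/2], and let g ∈ R(A^α). Then the solution W_A(t)g of w''+Aw=0, (w,w')(0)=(0,g) satisfies t^{2α-1}‖W_A(t)g‖_X ≤ 2^{1/2+α(1-2α)} (∫₀^∞ s^{2α-1}‖e^{-sA}g‖²_X ds)^{1/2} for all t > 0. In particular, if α = 1/2 then W_A(·)g is uniformly bounded in X. -/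
/-!
By the spectral theorem, every nonnegative selfadjoint operator `A` on a complex
Hilbert space `X` (with trivial kernel) is unitarily equivalent to multiplication by a
measurable function `a ≥ 0` (with `a > 0` a.e.) on some `L²(μ)`.  We formalize the
statement in this spectral model: `X = L²(μ)`, `(e^{-tA}x)(i) = exp(-t·a i)·x i`,
`(A^α y)(i) = (a i)^α·y i`, and `x ∈ R(A^α)` iff `x = A^α y` for some `y ∈ L²(μ)`.
-/

open MeasureTheory Filter
open scoped ENNReal NNReal Topology

/-- The wave-propagator kernel `sin(t√λ)/√λ` (continuously extended by `t` at `λ = 0`),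
so that `(W_A(t)g)(i) = waveKernel t (a i) · g i` in the spectral model. -/
noncomputable def waveKernel (t lam : ℝ) : ℝ :=
  if lam = 0 then t else Real.sin (t * Real.sqrt lam) / Real.sqrt lam

/-!
On the spectrum, `|sin(t√λ)/√λ|² ≤ min(t², 1/λ) ≤ (t²)^{1-2α} λ^{-2α}`, so
`t^{2(2α-1)} |W(t,λ)|² ≤ λ^{-2α}`. Since `∫₀^∞ s^{2α-1} e^{-2sλ} ds = (2λ)^{-2α} Γ(2α)` and
`2^{1-4α²} Γ(2α) ≥ 1` for `0 < α ≤ 1/2`, this is at most `2^{1+2α(1-2α)}` times the Laplace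
integral. Integrating against the spectral measure `|g|² dμ`, which is finite, and exchanging the
order of integration gives the square of the estimate.
-/

open Set Real

lemma one_le_Gamma_of_le_one {x : ℝ} (hx : 0 < x) (hx1 : x ≤ 1) : 1 ≤ Gamma x := by
  simpa [Gamma_one] using Gamma_strictAntiOn_Ioc.antitoneOn ⟨hx, hx1⟩ ⟨one_pos, le_rfl⟩ hx1

lemma mul_rpow_half_le_of_sq_mul_le {c K X Y : ℝ≥0∞} (h : c ^ 2 * X ≤ K ^ 2 * Y) :
    c * X ^ ((1 : ℝ) / 2) ≤ K * Y ^ ((1 : ℝ) / 2) := by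
  have hsqrt : ∀ x : ℝ≥0∞, (x ^ 2) ^ ((1 : ℝ) / 2) = x := fun x => by
    simpa [one_div] using ENNReal.pow_rpow_inv_natCast (x := x) two_ne_zero
  calc c * X ^ ((1 : ℝ) / 2) = (c ^ 2 * X) ^ ((1 : ℝ) / 2) := by
        rw [ENNReal.mul_rpow_of_nonneg _ _ (by norm_num), hsqrt]
    _ ≤ (K ^ 2 * Y) ^ ((1 : ℝ) / 2) := ENNReal.rpow_le_rpow h (by norm_num)
    _ = K * Y ^ ((1 : ℝ) / 2) := by rw [ENNReal.mul_rpow_of_nonneg _ _ (by norm_num), hsqrt]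

lemma min_le_rpow_mul_rpow {x y β : ℝ} (hx : 0 ≤ x) (hy : 0 ≤ y) (hβ0 : 0 ≤ β) (hβ1 : β ≤ 1) :
    min x y ≤ x ^ (1 - β) * y ^ β :=
  calc min x y = min x y ^ (1 - β) * min x y ^ β := by
        rw [← rpow_add' (le_min hx hy) (by simp), sub_add_cancel, rpow_one]
    _ ≤ x ^ (1 - β) * y ^ β := by
        gcongr
        · exact min_le_left x y
        · exact min_le_right x y

lemma sq_waveKernel_le_min {t lam : ℝ} (hlam : 0 < lam) :
    waveKernel t lam ^ 2 ≤ min (t ^ 2) lam⁻¹ := by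
  have hsq : √lam ^ 2 = lam := sq_sqrt hlam.le
  rw [waveKernel, if_neg hlam.ne', div_pow, hsq, div_eq_mul_inv]
  refine le_min ?_ ?_
  · calc sin (t * √lam) ^ 2 * lam⁻¹ ≤ (t * √lam) ^ 2 * lam⁻¹ := by
          gcongr ?_ * _; exact sin_sq_le_sq
      _ = t ^ 2 := by rw [mul_pow, hsq, mul_assoc, mul_inv_cancel₀ hlam.ne', mul_one]
  · simpa using mul_le_mul_of_nonneg_right (sin_sq_le_one (t * √lam)) (inv_nonneg.2 hlam.le)

lemma rpow_mul_sq_waveKernel_le {t lam β : ℝ} (ht : 0 < t) (hlam : 0 < lam)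
    (hβ0 : 0 ≤ β) (hβ1 : β ≤ 1) :
    (t ^ 2) ^ (β - 1) * waveKernel t lam ^ 2 ≤ lam⁻¹ ^ β := by
  have ht2 : 0 < t ^ 2 := by positivity
  calc (t ^ 2) ^ (β - 1) * waveKernel t lam ^ 2
      ≤ (t ^ 2) ^ (β - 1) * ((t ^ 2) ^ (1 - β) * lam⁻¹ ^ β) := by
        gcongr
        exact (sq_waveKernel_le_min hlam).trans
          (min_le_rpow_mul_rpow ht2.le (inv_nonneg.2 hlam.le) hβ0 hβ1)
    _ = lam⁻¹ ^ β := by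
        rw [← mul_assoc, ← rpow_add ht2, sub_add_sub_cancel', sub_self, rpow_zero, one_mul]

lemma lintegral_rpow_mul_exp_neg_mul_Ioi_s9 {β r : ℝ} (hβ : 0 < β) (hr : 0 < r) :
    ∫⁻ s in Ioi (0 : ℝ), ENNReal.ofReal (s ^ (β - 1)) * ENNReal.ofReal (exp (-(r * s)))
      = ENNReal.ofReal ((1 / r) ^ β * Gamma β) := by
  have hint : IntegrableOn (fun s : ℝ => s ^ (β - 1) * exp (-(r * s))) (Ioi 0) := by
    simpa using integrableOn_rpow_mul_exp_neg_mul_rpow (by linarith : -1 < β - 1) one_pos hr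
  rw [← integral_rpow_mul_exp_neg_mul_Ioi hβ hr, ofReal_integral_eq_lintegral_ofReal hint
    ((ae_restrict_mem measurableSet_Ioi).mono fun s (hs : 0 < s) => by positivity)]
  refine setLIntegral_congr_fun measurableSet_Ioi fun s hs => ?_
  rw [ENNReal.ofReal_mul (rpow_nonneg (le_of_lt hs) _)]

lemma inv_rpow_le_two_rpow_mul_Gamma {α lam : ℝ} (hα1 : 0 < α) (hα2 : α ≤ 1 / 2)
    (hlam : 0 < lam) :
    lam⁻¹ ^ (2 * α) ≤
      (2 ^ ((1 : ℝ) / 2 + α * (1 - 2 * α))) ^ 2 * ((1 / (2 * lam)) ^ (2 * α) * Gamma (2 * α)) := by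
  have hconst : ((2 : ℝ) ^ ((1 : ℝ) / 2 + α * (1 - 2 * α))) ^ 2 * (1 / 2) ^ (2 * α)
      = 2 ^ (1 - 4 * α ^ 2) := by
    rw [← rpow_natCast, ← rpow_mul zero_le_two, one_div, inv_rpow zero_le_two,
      ← rpow_neg zero_le_two, ← rpow_add zero_lt_two]
    ring_nf
  have hpow : (1 : ℝ) ≤ 2 ^ (1 - 4 * α ^ 2) := one_le_rpow one_le_two (by nlinarith)
  have hΓ : 1 ≤ Gamma (2 * α) := one_le_Gamma_of_le_one (by linarith) (by linarith)
  calc lam⁻¹ ^ (2 * α) = 1 * 1 * lam⁻¹ ^ (2 * α) := by ring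
    _ ≤ 2 ^ (1 - 4 * α ^ 2) * Gamma (2 * α) * lam⁻¹ ^ (2 * α) := by gcongr
    _ = _ := by
        rw [← hconst, one_div (2 * lam), mul_inv, mul_rpow (by norm_num) (by positivity), one_div]
        ring

lemma ofReal_sq_mul_sq_waveKernel_le {α t lam : ℝ} (hα1 : 0 < α) (hα2 : α ≤ 1 / 2)
    (ht : 0 < t) (hlam : 0 < lam) :
    ENNReal.ofReal (t ^ (2 * α - 1)) ^ 2 * ENNReal.ofReal (waveKernel t lam ^ 2)
      ≤ ENNReal.ofReal (2 ^ ((1 : ℝ) / 2 + α * (1 - 2 * α))) ^ 2 *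
        ∫⁻ s in Ioi (0 : ℝ), ENNReal.ofReal (s ^ (2 * α - 1)) *
          ENNReal.ofReal (exp (-(2 * s * lam))) := by
  have hlaplace := lintegral_rpow_mul_exp_neg_mul_Ioi_s9 (by linarith : 0 < 2 * α)
    (by positivity : 0 < 2 * lam)
  simp_rw [mul_right_comm 2 _ lam] at hlaplace ⊢
  rw [hlaplace, ← ENNReal.ofReal_pow (by positivity), ← ENNReal.ofReal_pow (by positivity),
    ← ENNReal.ofReal_mul (by positivity), ← ENNReal.ofReal_mul (by positivity)]
  refine ENNReal.ofReal_le_ofReal ((le_of_eq ?_).trans ((rpow_mul_sq_waveKernel_le ht hlam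
    (by linarith) (by linarith)).trans (inv_rpow_le_two_rpow_mul_Gamma hα1 hα2 hlam)))
  rw [← rpow_natCast, ← rpow_natCast t, ← rpow_mul ht.le, ← rpow_mul ht.le]
  ring_nf

/-- The image of `spectralMeasure μ g` under `a` is the spectral measure `⟨E_A(·) g, g⟩` of `A`
at `g`. -/
noncomputable def spectralMeasure {ι : Type*} [MeasurableSpace ι] (μ : Measure ι) (g : ι → ℂ) :
    Measure ι :=
  μ.withDensity fun i => (‖g i‖₊ : ℝ≥0∞) ^ 2

section SpectralMeasure

variable {ι : Type*} [MeasurableSpace ι] {μ : Measure ι} {g : ι → ℂ}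

lemma isFiniteMeasure_spectralMeasure (hg : MemLp g 2 μ) :
    IsFiniteMeasure (spectralMeasure μ g) := by
  refine isFiniteMeasure_withDensity (ne_of_lt ?_)
  simpa [enorm_eq_nnnorm] using
    lintegral_rpow_enorm_lt_top_of_eLpNorm_lt_top two_ne_zero ENNReal.ofNat_ne_top hg.eLpNorm_lt_top

lemma lintegral_spectralMeasure (hg : AEMeasurable g μ) (f : ι → ℝ≥0∞) :
    ∫⁻ i, f i ∂spectralMeasure μ g = ∫⁻ i, (‖g i‖₊ : ℝ≥0∞) ^ 2 * f i ∂μ :=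
  lintegral_withDensity_eq_lintegral_mul_non_measurable₀ μ
    (hg.nnnorm.coe_nnreal_ennreal.pow_const 2) (ae_of_all _ fun _ => by simp) f

lemma eLpNorm_ofReal_mul_eq (hg : AEMeasurable g μ) (w : ι → ℝ) :
    eLpNorm (fun i => (w i : ℂ) * g i) 2 μ
      = (∫⁻ i, ENNReal.ofReal (w i ^ 2) ∂spectralMeasure μ g) ^ ((1 : ℝ) / 2) := by
  rw [eLpNorm_eq_lintegral_rpow_enorm_toReal two_ne_zero ENNReal.ofNat_ne_top,
    lintegral_spectralMeasure hg]
  congr 1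
  refine lintegral_congr fun i => ?_
  rw [← sq_abs, ENNReal.ofReal_pow (abs_nonneg _), ← Real.enorm_eq_ofReal_abs]
  simp [mul_pow, mul_comm, enorm_eq_nnnorm]

lemma heatNormSq_eq (hg : AEMeasurable g μ) (a : ι → ℝ) (s : ℝ) :
    heatNormSq μ a g s = ∫⁻ i, ENNReal.ofReal (exp (-(2 * s * a i))) ∂spectralMeasure μ g :=
  (lintegral_spectralMeasure hg _).symm

lemma rangeIntegral_eq (hg : AEMeasurable g μ) [SFinite (spectralMeasure μ g)] {a : ι → ℝ}
    (ha : Measurable a) (α : ℝ) :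
    rangeIntegral μ a α g = ∫⁻ i, (∫⁻ s in Ioi (0 : ℝ), ENNReal.ofReal (s ^ (2 * α - 1)) *
      ENNReal.ofReal (exp (-(2 * s * a i)))) ∂spectralMeasure μ g := by
  simp_rw [rangeIntegral, heatNormSq_eq hg, ← lintegral_const_mul' _ _ ENNReal.ofReal_ne_top]
  refine lintegral_lintegral_swap (Measurable.aemeasurable ?_)
  fun_prop

end SpectralMeasure

theorem stmt9_general {ι : Type*} [MeasurableSpace ι] (μ : Measure ι)
    (a : ι → ℝ) (hameas : Measurable a) (ha0 : ∀ i, 0 ≤ a i)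
    (hker : ∀ᵐ i ∂μ, a i ≠ 0)
    (α : ℝ) (hα1 : 0 < α) (hα2 : α ≤ 1 / 2)
    (g : ι → ℂ) (hg : MemLp g 2 μ)
    (t : ℝ) (ht : 0 < t) :
    ENNReal.ofReal (t ^ (2 * α - 1)) *
        eLpNorm (fun i => ((waveKernel t (a i) : ℝ) : ℂ) * g i) 2 μ
      ≤ ENNReal.ofReal (2 ^ ((1 : ℝ) / 2 + α * (1 - 2 * α))) *
        (rangeIntegral μ a α g) ^ ((1 : ℝ) / 2) := by
  have hgm : AEMeasurable g μ := hg.aemeasurable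
  have := isFiniteMeasure_spectralMeasure hg
  have ha_pos : ∀ᵐ i ∂spectralMeasure μ g, 0 < a i :=
    (withDensity_absolutelyContinuous μ _).ae_le (hker.mono fun i hi => (ha0 i).lt_of_ne' hi)
  rw [eLpNorm_ofReal_mul_eq hgm, rangeIntegral_eq hgm hameas]
  refine mul_rpow_half_le_of_sq_mul_le ?_
  rw [← lintegral_const_mul' _ _ (by simp), ← lintegral_const_mul' _ _ (by simp)]
  exact lintegral_mono_ae (ha_pos.mono fun i hi => ofReal_sq_mul_sq_waveKernel_le hα1 hα2 ht hi)

/-- For `α ∈ (0,1/2]` and `g ∈ R(A^α)`, the solution `W_A(t)g` of the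
abstract wave equation with data `(0,g)` satisfies
`t^{2α-1} ‖W_A(t)g‖_X ≤ 2^{1/2+α(1-2α)} (∫₀^∞ s^{2α-1}‖e^{-sA}g‖² ds)^{1/2}` for `t > 0`
(in particular, for `α = 1/2` the solution is uniformly bounded in `X`). -/
theorem stmt9 {ι : Type*} [MeasurableSpace ι] (μ : Measure ι)
    (a : ι → ℝ) (hameas : Measurable a) (ha0 : ∀ i, 0 ≤ a i)
    (hker : ∀ᵐ i ∂μ, a i ≠ 0)
    (α : ℝ) (hα1 : 0 < α) (hα2 : α ≤ 1 / 2)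
    (g : ι → ℂ) (hg : MemLp g 2 μ)
    (hgR : ∃ y : ι → ℂ, MemLp y 2 μ ∧ g =ᵐ[μ] fun i => ((a i ^ α : ℝ) : ℂ) * y i)
    (t : ℝ) (ht : 0 < t) :
    ENNReal.ofReal (t ^ (2 * α - 1)) *
        eLpNorm (fun i => ((waveKernel t (a i) : ℝ) : ℂ) * g i) 2 μ
      ≤ ENNReal.ofReal (2 ^ ((1 : ℝ) / 2 + α * (1 - 2 * α))) *
        (rangeIntegral μ a α g) ^ ((1 : ℝ) / 2) :=
  stmt9_general μ a hameas ha0 hker α hα1 hα2 g hg t ht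
end
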